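/- Let R^𝔰𝔭 be a traceless algebraic curvature tensor of Sp-type on a pseudo-quaternion Hermitian vector space (V, g, J₁, J₂, J₃) and ξ a null vector with 1-form θ = ξ♭. If θ ∧ R^𝔰𝔭_{WU} = 0 and (θ∘Jₐ) ∧ R^𝔰𝔭_{WU} = 0 for a = 1,2,3 and all W, U, and θ, θ∘J₁, θ∘J₂, θ∘J₃ are linearly independent, then R^𝔰𝔭 = 0. -/

import Mathlib

/-! A 2-form `ω` with `α ∧ ω = β ∧ ω = γ ∧ ω = 0` for linearly independent 1-forms `α, β, γ`
(here `θ, θ∘J₁, θ∘J₂` and `ω = R(·, ·, W, U)`) vanishes. Choose `z` with `β z = γ z = 0` and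
`α z ≠ 0`. If `ω(a, z) ≠ 0` for some `a`, the identities `β ∧ ω = 0` and `γ ∧ ω = 0` at `(x, a, z)`
make both `β` and `γ` multiples of `ω(·, z)`, against their independence; so `ω(·, z) = 0`, and
`α ∧ ω = 0` at `(X, Y, z)` reads `α z · ω(X, Y) = 0`. -/

section

variable {K V : Type*} [Field K] [AddCommGroup V] [Module K V]

/-- `φ ∧ ω = 0`, evaluated on three vectors. -/
def WedgeEqZero (φ : V →ₗ[K] K) (ω : V → V → K) : Prop :=
  ∀ X Y Z : V, φ X * ω Y Z - φ Y * ω X Z + φ Z * ω X Y = 0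

theorem exists_apply_ne_zero_of_notMem_span {ι : Type*} [Finite ι] {f : ι → V →ₗ[K] K}
    {φ : V →ₗ[K] K} (h : φ ∉ Submodule.span K (Set.range f)) : ∃ z, (∀ i, f i z = 0) ∧ φ z ≠ 0 := by
  by_contra! hz
  exact h (mem_span_of_iInf_ker_le_ker fun z hz' ↦ hz z fun i ↦ (Submodule.mem_iInf _).1 hz' i)

theorem WedgeEqZero.apply_eq_zero {β γ : V →ₗ[K] K} {ω : V → V → K}
    (hind : LinearIndependent K ![β, γ]) (hβ : WedgeEqZero β ω) (hγ : WedgeEqZero γ ω)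
    {z : V} (hβz : β z = 0) (hγz : γ z = 0) (a : V) : ω a z = 0 := by
  by_contra ha
  have proportional {δ : V →ₗ[K] K} (hδ : WedgeEqZero δ ω) (hδz : δ z = 0) (x : V) :
      δ x * ω a z = δ a * ω x z := by
    linear_combination hδ x a z - ω x a * hδz
  have hdep : γ a • β + (-β a) • γ = 0 := LinearMap.ext fun x ↦ mul_right_cancel₀ ha <| by
    simp only [LinearMap.add_apply, LinearMap.smul_apply, smul_eq_mul, LinearMap.zero_apply]
    linear_combination γ a * proportional hβ hβz x - β a * proportional hγ hγz x
  have hβa : β a = 0 := neg_eq_zero.1 (LinearIndependent.pair_iff.1 hind _ _ hdep).2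
  refine hind.ne_zero 0 (LinearMap.ext fun x ↦ ?_)
  have hβx : β x * ω a z = 0 := by rw [proportional hβ hβz x, hβa, zero_mul]
  exact (mul_eq_zero.1 hβx).resolve_right ha

theorem eq_zero_of_wedgeEqZero {α β γ : V →ₗ[K] K} {ω : V → V → K}
    (hind : LinearIndependent K ![α, β, γ])
    (hα : WedgeEqZero α ω) (hβ : WedgeEqZero β ω) (hγ : WedgeEqZero γ ω) (X Y : V) :
    ω X Y = 0 := by
  obtain ⟨hind', hα_notMem⟩ := linearIndependent_finSucc.1 hind
  obtain ⟨z, hz, hαz⟩ := exists_apply_ne_zero_of_notMem_span hα_notMem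
  have hωz (a : V) : ω a z = 0 := hβ.apply_eq_zero hind' hγ (hz 0) (hz 1) a
  have hαω : α z * ω X Y = 0 := by linear_combination hα X Y z - α X * hωz Y + α Y * hωz X
  exact (mul_eq_zero.1 hαω).resolve_left hαz

end

theorem stmt18_general (V : Type*) [AddCommGroup V] [Module ℝ V]
    (g : LinearMap.BilinForm ℝ V)
    (J₁ J₂ J₃ : V →ₗ[ℝ] V)
    (ξ : V)
    (hLI : ∀ a b c d : ℝ,
      (∀ x : V, a * g ξ x + b * g ξ (J₁ x) + c * g ξ (J₂ x) + d * g ξ (J₃ x) = 0) →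
      a = 0 ∧ b = 0 ∧ c = 0 ∧ d = 0)
    (R : V →ₗ[ℝ] V →ₗ[ℝ] V →ₗ[ℝ] V →ₗ[ℝ] ℝ)
    (hwedgeθ : ∀ W U X Y Z : V,
      g ξ X * R Y Z W U - g ξ Y * R X Z W U + g ξ Z * R X Y W U = 0)
    (hwedgeθJ1 : ∀ W U X Y Z : V,
      g ξ (J₁ X) * R Y Z W U - g ξ (J₁ Y) * R X Z W U + g ξ (J₁ Z) * R X Y W U = 0)
    (hwedgeθJ2 : ∀ W U X Y Z : V,
      g ξ (J₂ X) * R Y Z W U - g ξ (J₂ Y) * R X Z W U + g ξ (J₂ Z) * R X Y W U = 0) :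
    ∀ X Y Z W : V, R X Y Z W = 0 := by
  intro X Y Z W
  have hind : LinearIndependent ℝ ![g ξ, (g ξ).comp J₁, (g ξ).comp J₂] := by
    refine Fintype.linearIndependent_iff.2 fun c hc ↦ ?_
    obtain ⟨h0, h1, h2, -⟩ := hLI (c 0) (c 1) (c 2) 0 fun x ↦ by
      simpa [Fin.sum_univ_three] using LinearMap.congr_fun hc x
    intro i
    fin_cases i <;> assumption
  exact eq_zero_of_wedgeEqZero hind (hwedgeθ Z W) (hwedgeθJ1 Z W) (hwedgeθJ2 Z W) X Y

/-- Let `R` be a traceless algebraic curvature tensor of `𝔰𝔭`-type on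
a pseudo- or para-quaternion Hermitian vector space `(V, g, J₁, J₂, J₃)` of dimension
`4n ≥ 8`, and `ξ` a null vector with `θ = ξ♭`.  If `θ ∧ R_{WU} = 0` and
`(θ∘Jₐ) ∧ R_{WU} = 0` for `a = 1,2,3` and all `W, U`, and `θ, θ∘J₁, θ∘J₂, θ∘J₃` are
linearly independent, then `R = 0`. -/
theorem stmt18 (V : Type*) [AddCommGroup V] [Module ℝ V] [FiniteDimensional ℝ V]
    (n : ℕ) (hn : 2 ≤ n) (hdim : Module.finrank ℝ V = 4 * n)
    (ε₁ ε₂ ε₃ : ℝ)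
    (hε : (ε₁ = -1 ∧ ε₂ = -1 ∧ ε₃ = -1) ∨ (ε₁ = -1 ∧ ε₂ = 1 ∧ ε₃ = 1))
    (g : LinearMap.BilinForm ℝ V)
    (hsymm : ∀ x y : V, g x y = g y x)
    (hnd : ∀ x : V, (∀ y : V, g x y = 0) → x = 0)
    (J₁ J₂ J₃ : V →ₗ[ℝ] V)
    (hJ1 : ∀ x : V, J₁ (J₁ x) = ε₁ • x)
    (hJ2 : ∀ x : V, J₂ (J₂ x) = ε₂ • x)
    (hJ3 : ∀ x : V, J₃ (J₃ x) = ε₃ • x)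
    (hJ12 : ∀ x : V, J₁ (J₂ x) = J₃ x)
    (hskew1 : ∀ x y : V, g (J₁ x) y + g x (J₁ y) = 0)
    (hskew2 : ∀ x y : V, g (J₂ x) y + g x (J₂ y) = 0)
    (hskew3 : ∀ x y : V, g (J₃ x) y + g x (J₃ y) = 0)
    (ξ : V) (hnull : g ξ ξ = 0)
    (hLI : ∀ a b c d : ℝ,
      (∀ x : V, a * g ξ x + b * g ξ (J₁ x) + c * g ξ (J₂ x) + d * g ξ (J₃ x) = 0) →
      a = 0 ∧ b = 0 ∧ c = 0 ∧ d = 0)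
    (R : V →ₗ[ℝ] V →ₗ[ℝ] V →ₗ[ℝ] V →ₗ[ℝ] ℝ)
    (hanti1 : ∀ X Y Z W : V, R X Y Z W = -R Y X Z W)
    (hanti2 : ∀ X Y Z W : V, R X Y Z W = -R X Y W Z)
    (hpair : ∀ X Y Z W : V, R X Y Z W = R Z W X Y)
    (hbianchi : ∀ X Y Z W : V, R X Y Z W + R Y Z X W + R Z X Y W = 0)
    (hsp1 : ∀ X Y Z W : V, R (J₁ X) Y Z W + R X (J₁ Y) Z W = 0)
    (hsp2 : ∀ X Y Z W : V, R (J₂ X) Y Z W + R X (J₂ Y) Z W = 0)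
    (hsp3 : ∀ X Y Z W : V, R (J₃ X) Y Z W + R X (J₃ Y) Z W = 0)
    (m : ℕ) (e : Module.Basis (Fin m) ℝ V) (s : Fin m → ℝ)
    (hs : ∀ i, s i = 1 ∨ s i = -1)
    (horth : ∀ i j, g (e i) (e j) = if i = j then s i else 0)
    (htraceless : ∀ Y W : V, ∑ i, s i * R (e i) Y (e i) W = 0)
    (hwedgeθ : ∀ W U X Y Z : V,
      g ξ X * R Y Z W U - g ξ Y * R X Z W U + g ξ Z * R X Y W U = 0)
    (hwedgeθJ1 : ∀ W U X Y Z : V,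
      g ξ (J₁ X) * R Y Z W U - g ξ (J₁ Y) * R X Z W U + g ξ (J₁ Z) * R X Y W U = 0)
    (hwedgeθJ2 : ∀ W U X Y Z : V,
      g ξ (J₂ X) * R Y Z W U - g ξ (J₂ Y) * R X Z W U + g ξ (J₂ Z) * R X Y W U = 0)
    (hwedgeθJ3 : ∀ W U X Y Z : V,
      g ξ (J₃ X) * R Y Z W U - g ξ (J₃ Y) * R X Z W U + g ξ (J₃ Z) * R X Y W U = 0) :
    ∀ X Y Z W : V, R X Y Z W = 0 :=
  stmt18_general V g J₁ J₂ J₃ ξ hLI R hwedgeθ hwedgeθJ1 hwedgeθJ2
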